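/- Let (T, Σ, ν) be a measure space with ν(T) = 1, (Ω, 𝒜, P) a probability space, Π̂ ⊆ 𝒜 a sub-σ-algebra, f : T → L²(Ω, P) a Pettis integrable stochastic process, and f̂(t) = E[f(t) | Π̂]. If f satisfies condition (P2) and f̂ satisfies condition (P1), then f̂ is Pettis integrable. -/

import Mathlib

open MeasureTheory

/-- `xbar` is the Pettis integral of the process `g : T → L²(Ω, P)`:
`g` is weakly measurable and `⟪x, xbar⟫ = ∫ ⟪x, g t⟫ dν` for every `x`. -/
def IsPettisIntegral {T : Type*} [MeasurableSpace T] (ν : Measure T)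
    {Ω : Type*} [mΩ' : MeasurableSpace Ω] {P : Measure Ω}
    (g : T → Lp ℝ 2 P) (xbar : Lp ℝ 2 P) : Prop :=
  (∀ x : Lp ℝ 2 P, NullMeasurable (fun t => (inner ℝ x (g t) : ℝ)) ν) ∧
  (∀ x : Lp ℝ 2 P, (inner ℝ x xbar : ℝ) = ∫ t, (inner ℝ x (g t) : ℝ) ∂ν)

/-- `condexpL2` agrees a.e. with `condexp` for `L²` functions over a finite measure. -/
lemma condexpL2_ae_eq_condexp' {Ω : Type*} [mΩ : MeasurableSpace Ω] {P : Measure Ω}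
    [IsFiniteMeasure P] {m : MeasurableSpace Ω} (hm : m ≤ mΩ) (g : Lp ℝ 2 P) :
    ((condExpL2 ℝ ℝ hm g : Lp ℝ 2 P) : Ω → ℝ) =ᵐ[P] P[(g : Ω → ℝ)|m] := by
  refine ae_eq_condExp_of_forall_setIntegral_eq hm ?_ ?_ ?_ ?_
  · exact (Lp.memLp g).integrable one_le_two
  · intro s _ hμs
    exact integrableOn_condExpL2_of_measure_ne_top hm hμs.ne g
  · intro s hs hμs
    exact integral_condExpL2_eq_of_fin_meas_real g hs hμs.ne
  · exact lpMeas.aestronglyMeasurable _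

/-- Let `Π̂ ⊆ 𝒜` be a sub-σ-algebra, `f : T → L²(Ω, P)` a Pettis
integrable stochastic process, and `f̂ t = E[f t | Π̂]`.  If `f` satisfies (P2)
(`t ↦ ‖f t‖` is measurable w.r.t. the completion of `ν` and `∫ ‖f t‖ dν < ∞`) and `f̂`
satisfies (P1) (`t ↦ ⟪f̂ s, f̂ t⟫` is measurable w.r.t. the completion of `ν` for every
`s`), then `f̂` is Pettis integrable. -/
theorem pettisIntegrable_condexp
    {T : Type*} [MeasurableSpace T] (ν : Measure T) [IsProbabilityMeasure ν]
    {Ω : Type*} [mΩ : MeasurableSpace Ω] (P : Measure Ω) [IsProbabilityMeasure P]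
    (f fhat : T → Lp ℝ 2 P)
    (hfPettis : ∃ fbar : Lp ℝ 2 P, IsPettisIntegral (mΩ' := mΩ) ν f fbar)
    (hP2meas : NullMeasurable (fun t => ‖f t‖) ν)
    (hP2int : ∫⁻ t, ENNReal.ofReal ‖f t‖ ∂ν < ⊤)
    (hP1hat : ∀ s : T, NullMeasurable (fun t => (inner ℝ (fhat s) (fhat t) : ℝ)) ν)
    (m : MeasurableSpace Ω) (hm : m ≤ mΩ)
    (hfhat : ∀ t : T, (fhat t : Ω → ℝ) =ᵐ[P] P[(f t : Ω → ℝ)|m]) :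
    ∃ ghat : Lp ℝ 2 P, IsPettisIntegral (mΩ' := mΩ) ν fhat ghat := by
  obtain ⟨fbar, hmeas, hint⟩ := hfPettis
  -- `fhat t` is exactly `condexpL2` applied to `f t`
  have hfhat_eq : ∀ t, fhat t = (condExpL2 ℝ ℝ hm (f t) : Lp ℝ 2 P) := by
    intro t
    have h : (fhat t : Ω → ℝ) =ᵐ[P] ((condExpL2 ℝ ℝ hm (f t) : Lp ℝ 2 P) : Ω → ℝ) :=
      (hfhat t).trans (condexpL2_ae_eq_condexp' (mΩ := mΩ) hm (f t)).symm
    exact Lp.ext (μ := P) h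
  -- key self-adjointness identity
  have hkey : ∀ (x : Lp ℝ 2 P) (t : T),
      (inner ℝ x (fhat t) : ℝ) = inner ℝ ((condExpL2 ℝ ℝ hm x : Lp ℝ 2 P)) (f t) := by
    intro x t
    rw [hfhat_eq t, ← inner_condExpL2_left_eq_right]
  refine ⟨(condExpL2 ℝ ℝ hm fbar : Lp ℝ 2 P), ?_, ?_⟩
  · intro x
    simp_rw [hkey x]
    exact hmeas _
  · intro x
    have : (inner ℝ x ((condExpL2 ℝ ℝ hm fbar : Lp ℝ 2 P)) : ℝ)
        = inner ℝ ((condExpL2 ℝ ℝ hm x : Lp ℝ 2 P)) fbar := by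
      rw [← inner_condExpL2_left_eq_right]
    rw [this, hint]
    exact integral_congr_ae (Filter.Eventually.of_forall fun t => (hkey x t).symm)
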